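/- arXiv:2501.06079 — 2 statements merged into one kernel-verified Lean document; each statement's English description precedes it below -/
import Mathlib

section
/- Let R_K(Z) := {A ∈ 𝒫(Z) : A = eco(A + K)} and define A ⊞ B := eco(A + B) for A, B ∈ R_K(Z). Then ⊞ is commutative and associative on R_K(Z) — in particular A₁ ⊞ (A₂ ⊞ A₃) = (A₁ ⊞ A₂) ⊞ A₃ for all A₁, A₂, A₃ ∈ R_K(Z) — and A ⊞ K = A for every A ∈ R_K(Z), so (R_K(Z), ⊞) is a commutative monoid with neutral element K. -/
open scoped Classical Pointwise
noncomputable section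

variable {X : Type*} [AddCommGroup X] [Module ℝ X] [TopologicalSpace X]
  [IsTopologicalAddGroup X] [ContinuousSMul ℝ X]
variable {Z : Type*} [AddCommGroup Z] [Module ℝ Z] [TopologicalSpace Z]
  [IsTopologicalAddGroup Z] [ContinuousSMul ℝ Z]

/-- A set is evenly convex (e-convex) if it is the intersection of an arbitrary
(possibly empty) family of open half-spaces. -/
def IsEConvex {Y : Type*} [AddCommGroup Y] [Module ℝ Y] [TopologicalSpace Y]
    (C : Set Y) : Prop :=
  ∃ S : Set ((Y →L[ℝ] ℝ) × ℝ), C = ⋂ p ∈ S, {y | p.1 y < p.2}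

/-- The evenly convex hull of `C`: the smallest e-convex set containing `C`. -/
def eco {Y : Type*} [AddCommGroup Y] [Module ℝ Y] [TopologicalSpace Y]
    (C : Set Y) : Set Y :=
  ⋂₀ {D : Set Y | IsEConvex D ∧ C ⊆ D}

/-- The negative polar cone of `K`. -/
def negPolar (K : Set Z) : Set (Z →L[ℝ] ℝ) := {z' | ∀ z ∈ K, z' z ≤ 0}

/-- `S_{(x*,z*)}(x) = {z | ⟨x,x*⟩ + ⟨z,z*⟩ < 0}`. -/
def Sopen (x' : X →L[ℝ] ℝ) (z' : Z →L[ℝ] ℝ) (x : X) : Set Z := {z | x' x + z' z < 0}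

/-- `S̄_{(x*,z*)}(x) = {z | ⟨x,x*⟩ + ⟨z,z*⟩ ≤ 0}`. -/
def Sclosed (x' : X →L[ℝ] ℝ) (z' : Z →L[ℝ] ℝ) (x : X) : Set Z := {z | x' x + z' z ≤ 0}

/-- Effective domain of a set-valued function. -/
def svDom (f : X → Set Z) : Set X := {x | f x ≠ ∅}

/-- A set-valued function is proper if its domain is nonempty and no value is all of `Z`. -/
def SVProper (f : X → Set Z) : Prop := svDom f ≠ ∅ ∧ ∀ x, f x ≠ Set.univ

/-- The `K`-epigraph of a set-valued function. -/
def epiK (K : Set Z) (f : X → Set Z) : Set (X × Z) := {p | p.2 ∈ f p.1 + K}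

/-- `f` is `K`-e-convex if its `K`-epigraph is e-convex. -/
def IsKEConvex (K : Set Z) (f : X → Set Z) : Prop := IsEConvex (epiK K f)

/-- The `K`-e-convex hull of `f`. -/
def KEco (K : Set Z) (f : X → Set Z) : X → Set Z := fun x => {z | (x, z) ∈ eco (epiK K f)}

/-- `g` is a (set-valued) minorant of `f`: `g(x) ≤_K f(x)`, i.e. `f(x)+K ⊆ g(x)+K`. -/
def IsMinorant (K : Set Z) (f g : X → Set Z) : Prop := ∀ x, f x + K ⊆ g x + K

/-- A `C`-affine set-valued function. -/
def IsCAffine (K : Set Z) (C : Set X) (a : X → Set Z) : Prop :=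
  ∃ x' : X →L[ℝ] ℝ, ∃ z' ∈ negPolar K \ {0}, ∃ zt : Z,
    ∀ x, a x = if x ∈ C then Sopen x' z' x + {zt} else ∅

/-- `M_f = eco (dom f)`. -/
def Mf (f : X → Set Z) : Set X := eco (svDom f)

/-- The set of all `M_f`-affine minorants of `f`. -/
def Hf (K : Set Z) (f : X → Set Z) : Set (X → Set Z) :=
  {a | IsCAffine K (Mf f) a ∧ IsMinorant K f a}

/-- A 𝒞-affine set-valued function: `C`-affine for some e-convex `C`. -/
def IsCalAffine (K : Set Z) (a : X → Set Z) : Prop :=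
  ∃ C : Set X, IsEConvex C ∧ IsCAffine K C a

/-- The set of all 𝒞-affine minorants of `f`. -/
def Cf (K : Set Z) (f : X → Set Z) : Set (X → Set Z) :=
  {a | IsCalAffine K a ∧ IsMinorant K f a}

/-- An e-affine set-valued function. -/
def IsEAffine (K : Set Z) (a : X → Set Z) : Prop :=
  ∃ x' y' : X →L[ℝ] ℝ, ∃ z' ∈ negPolar K \ {0}, ∃ zt : Z, ∃ α : ℝ,
    ∀ x, a x = if y' x < α then Sopen x' z' x + {zt} else ∅

/-- The set of all e-affine minorants of `f`. -/
def Ef (K : Set Z) (f : X → Set Z) : Set (X → Set Z) :=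
  {a | IsEAffine K a ∧ IsMinorant K f a}

/-- The modified negation of a subset of `Z`: `-∅ = Z`, `-Z = ∅`,
and the pointwise negation otherwise. -/
def negSet (A : Set Z) : Set Z :=
  if A = ∅ then Set.univ else if A = Set.univ then ∅ else -A

/-- The c-conjugate of a set-valued function `f`, defined (by `∅`-extension) on
`X* × X* × Z* × ℝ`; its meaningful domain is `X* × X* × (K*∖{0}) × ℝ`. -/
def cConj (K : Set Z) (f : X → Set Z)
    (w : (X →L[ℝ] ℝ) × (X →L[ℝ] ℝ) × (Z →L[ℝ] ℝ) × ℝ) : Set Z :=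
  if w.2.2.1 ∈ negPolar K \ {0} ∧ svDom f ⊆ {x | w.2.1 x < w.2.2.2} then
    negSet (eco (⋃ x : X, (f x + Sclosed w.1 w.2.2.1 (-x))))
  else ∅

/-- The c'-conjugate of `g : X* × X* × Z* × ℝ → 𝒫(Z)`. -/
def cPrimeConj (g : (X →L[ℝ] ℝ) × (X →L[ℝ] ℝ) × (Z →L[ℝ] ℝ) × ℝ → Set Z)
    (x : X) : Set Z :=
  if ∀ w : (X →L[ℝ] ℝ) × (X →L[ℝ] ℝ) × (Z →L[ℝ] ℝ) × ℝ, g w ≠ ∅ → w.2.1 x < w.2.2.2 then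
    ⋂ w ∈ {w : (X →L[ℝ] ℝ) × (X →L[ℝ] ℝ) × (Z →L[ℝ] ℝ) × ℝ | g w ≠ ∅},
      (Sclosed w.1 w.2.2.1 x + negSet (g w))
  else ∅

/-- The support function of the `K`-epigraph of `f` relative to open half-spaces,
with values in `ℝ ∪ {±∞}`. -/
def sigmaF (K : Set Z) (f : X → Set Z)
    (w : (X →L[ℝ] ℝ) × (X →L[ℝ] ℝ) × (Z →L[ℝ] ℝ) × ℝ) : EReal :=
  if svDom f ⊆ {x | w.2.1 x < w.2.2.2} then
    ⨆ p ∈ epiK K f, ((w.1 p.1 + w.2.2.1 p.2 : ℝ) : EReal)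
  else ⊤

/-- `η_C(x*,z*)`: `0` if the supremum of `⟨x,x*⟩+⟨z,z*⟩` over `C` is not attained
(every value is strictly below the supremum), `1` otherwise. -/
def etaSet (C : Set (X × Z)) (x' : X →L[ℝ] ℝ) (z' : Z →L[ℝ] ℝ) : ℕ :=
  if ∀ p ∈ C, ((x' p.1 + z' p.2 : ℝ) : EReal) < ⨆ q ∈ C, ((x' q.1 + z' q.2 : ℝ) : EReal)
  then 0 else 1

/-! The key fact is `eco (A + eco C) = eco (A + C)`: for each `a ∈ A` the set of `z` with
`a + z ∈ eco (A + C)` is an e-convex set containing `C`, hence containing `eco C`. Once the inner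
hulls can be dropped, the monoid laws are those of Minkowski addition. -/

section EvenlyConvexHull

variable {Y : Type*} [AddCommGroup Y] [Module ℝ Y] [TopologicalSpace Y]

lemma IsEConvex.sInter {𝒮 : Set (Set Y)} (h𝒮 : ∀ D ∈ 𝒮, IsEConvex D) : IsEConvex (⋂₀ 𝒮) := by
  choose! S hS using h𝒮
  refine ⟨⋃ D ∈ 𝒮, S D, ?_⟩
  ext y
  simp only [Set.mem_sInter, Set.mem_iInter, Set.mem_iUnion, Set.mem_ofPred_eq]
  constructor
  · rintro hy p ⟨D, hD, hp⟩
    have hyD := hy D hD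
    rw [hS D hD] at hyD
    exact Set.mem_iInter₂.1 hyD p hp
  · intro hy D hD
    rw [hS D hD]
    exact Set.mem_iInter₂.2 fun p hp => hy p ⟨D, hD, hp⟩

lemma IsEConvex.preimage_add_left {D : Set Y} (hD : IsEConvex D) (a : Y) :
    IsEConvex ((a + ·) ⁻¹' D) := by
  obtain ⟨S, rfl⟩ := hD
  refine ⟨(fun p : (Y →L[ℝ] ℝ) × ℝ => (p.1, p.2 - p.1 a)) '' S, ?_⟩
  ext z
  simp only [Set.mem_preimage, Set.mem_iInter, Set.mem_ofPred_eq, Set.forall_mem_image, map_add]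
  exact forall₂_congr fun p _ => by constructor <;> intro <;> linarith

lemma subset_eco (C : Set Y) : C ⊆ eco C := fun _ hz =>
  Set.mem_sInter.2 fun _ hD => hD.2 hz

lemma eco_subset {C D : Set Y} (hD : IsEConvex D) (h : C ⊆ D) : eco C ⊆ D :=
  Set.sInter_subset_of_mem ⟨hD, h⟩

lemma eco_mono {C D : Set Y} (h : C ⊆ D) : eco C ⊆ eco D :=
  Set.sInter_subset_sInter fun _ hE => ⟨hE.1, h.trans hE.2⟩

lemma isEConvex_eco (C : Set Y) : IsEConvex (eco C) :=
  IsEConvex.sInter fun _ hD => hD.1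

lemma eco_add_eco_right (A C : Set Y) : eco (A + eco C) = eco (A + C) := by
  refine (eco_subset (isEConvex_eco _) ?_).antisymm
    (eco_mono (Set.add_subset_add_left (subset_eco C)))
  rintro _ ⟨a, ha, z, hz, rfl⟩
  have hC : C ⊆ (a + ·) ⁻¹' eco (A + C) := fun c hc => subset_eco _ (Set.add_mem_add ha hc)
  exact eco_subset ((isEConvex_eco _).preimage_add_left a) hC hz

lemma eco_eco_add (A C : Set Y) : eco (eco A + C) = eco (A + C) := by
  rw [add_comm (eco A), eco_add_eco_right, add_comm]

end EvenlyConvexHull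

theorem stmt2_general (K : Set Z) :
    (∀ A B : Set Z, A = eco (A + K) → B = eco (B + K) → eco (A + B) = eco (B + A)) ∧
    (∀ A₁ A₂ A₃ : Set Z, A₁ = eco (A₁ + K) → A₂ = eco (A₂ + K) → A₃ = eco (A₃ + K) →
      eco (A₁ + eco (A₂ + A₃)) = eco (eco (A₁ + A₂) + A₃)) ∧
    (∀ A : Set Z, A = eco (A + K) → eco (A + K) = A) := by
  refine ⟨fun A B _ _ => by rw [add_comm], fun A₁ A₂ A₃ _ _ _ => ?_, fun A hA => hA.symm⟩
  rw [eco_add_eco_right, eco_eco_add, add_assoc]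

theorem stmt2 [T2Space Z] [LocallyConvexSpace ℝ Z]
    (K : Set Z) (hKconv : Convex ℝ K) (hKcone : ∀ c : ℝ, 0 < c → c • K ⊆ K)
    (hK0 : ({0} : Set Z) ⊂ K) (hKtop : K ≠ Set.univ) :
    (∀ A B : Set Z, A = eco (A + K) → B = eco (B + K) → eco (A + B) = eco (B + A)) ∧
    (∀ A₁ A₂ A₃ : Set Z, A₁ = eco (A₁ + K) → A₂ = eco (A₂ + K) → A₃ = eco (A₃ + K) →
      eco (A₁ + eco (A₂ + A₃)) = eco (eco (A₁ + A₂) + A₃)) ∧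
    (∀ A : Set Z, A = eco (A + K) → eco (A + K) = A) :=
  stmt2_general K

end
end

section
/- Let f : X → 𝒫(Z) be a set-valued function. For every x ∈ dom f^{cc'}, f^{cc'}(x) equals the intersection, over all (x*,y*,z*,α) ∈ dom σ_f, of the sets {z ∈ Z : ⟨x,x*⟩+⟨z,z*⟩ < σ_f(x*,y*,z*,α)} when η_{epi_K f}(x*,z*) = 0 and {z ∈ Z : ⟨x,x*⟩+⟨z,z*⟩ ≤ σ_f(x*,y*,z*,α)} when η_{epi_K f}(x*,z*) = 1. Consequently, f^{cc'}(x) is an e-convex set in Z for all x ∈ X, f^{cc'} is a K-e-convex set-valued function with f^{cc'}(x) = eco(f^{cc'}(x)+K) for all x, and f(x) ⊆ f^{cc'}(x) and f(x)+K ⊆ f^{cc'}(x) for all x ∈ X. -/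
open scoped Classical Pointwise
noncomputable section

variable {X : Type*} [AddCommGroup X] [Module ℝ X] [TopologicalSpace X]
  [IsTopologicalAddGroup X] [ContinuousSMul ℝ X]
variable {Z : Type*} [AddCommGroup Z] [Module ℝ Z] [TopologicalSpace Z]
  [IsTopologicalAddGroup Z] [ContinuousSMul ℝ Z]

/-!
Fix `w = (x*, y*, z*, α)` with `z* ∈ K* ∖ {0}` and `dom f ⊆ H⁻_{y*,α}`, and let `s` be the
supremum of `⟨x,x*⟩ + ⟨z,z*⟩` over `epi_K f`. Since `z* ≤ 0` on `K`, the union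
`⋃ₓ f(x) + S̄_{(x*,z*)}(-x)` is the `z*`-preimage of
`{t | t ≤ ⟨x,x*⟩ + ⟨z,z*⟩ for some (x,z) ∈ epi_K f}`, which is `{t < s}` or `{t ≤ s}` according
to whether `s` is attained, i.e. according to `η`. Being `∅`, `Z` or a half-space, this preimage
is e-convex, so `f^c(w)` is its modified negation: it is nonempty exactly when `σ_f(w) = s < +∞`,
and then `S̄_{(x*,z*)}(x) − f^c(w)` is the `η`-sublevel set of `z ↦ ⟨x,x*⟩ + ⟨z,z*⟩` at `σ_f(w)`.
So `z ∈ f^{cc'}(x)` iff for every such `w` both `⟨x,y*⟩ < α` and `⟨x,x*⟩ + ⟨z,z*⟩` lies in that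
sublevel set: open or closed half-space conditions in `(x, z)`, stable under adding `K` to `z`
and satisfied on `epi_K f`.
-/

section EvenlyConvex
variable {Y : Type*} [AddCommGroup Y] [Module ℝ Y] [TopologicalSpace Y]

lemma isEConvex_iInter {ι : Sort*} {C : ι → Set Y} (h : ∀ i, IsEConvex (C i)) :
    IsEConvex (⋂ i, C i) := by
  choose S hS using h
  refine ⟨⋃ i, S i, Set.ext fun y => ?_⟩
  simp only [hS, Set.mem_iInter, Set.mem_iUnion, forall_exists_index]
  exact forall_comm

lemma IsEConvex.inter {A B : Set Y} (hA : IsEConvex A) (hB : IsEConvex B) :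
    IsEConvex (A ∩ B) :=
  Set.inter_eq_iInter ▸ isEConvex_iInter (Bool.rec hB hA)

lemma isEConvex_empty : IsEConvex (∅ : Set Y) :=
  ⟨{(0, 0)}, by simp⟩

lemma isEConvex_univ : IsEConvex (Set.univ : Set Y) :=
  ⟨∅, by simp⟩

lemma isEConvex_setOf_lt (φ : Y →L[ℝ] ℝ) (c : ℝ) : IsEConvex {y | φ y < c} :=
  ⟨{(φ, c)}, by simp⟩

lemma isEConvex_setOf_le (φ : Y →L[ℝ] ℝ) (c : ℝ) : IsEConvex {y | φ y ≤ c} := by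
  refine ⟨{p | p.1 = φ ∧ c < p.2}, Set.ext fun y => ?_⟩
  simp only [Set.mem_iInter, Set.mem_ofPred_eq, and_imp, Prod.forall]
  refine ⟨fun hy _ _ hφ hc => hφ ▸ hy.trans_lt hc, fun h => ?_⟩
  by_contra hc
  exact lt_irrefl _ (h φ (φ y) rfl (not_le.1 hc))

lemma eco_eq_self {C : Set Y} (h : IsEConvex C) : eco C = C :=
  (Set.sInter_subset_of_mem (show C ∈ {D | IsEConvex D ∧ C ⊆ D} from ⟨h, subset_rfl⟩)).antisymm
    (Set.subset_sInter fun _ hD => hD.2)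

lemma IsEConvex.preimage_prodMk {Y' : Type*} [AddCommGroup Y'] [Module ℝ Y']
    [TopologicalSpace Y'] {E : Set (Y × Y')} (hE : IsEConvex E) (y : Y) :
    IsEConvex (Prod.mk y ⁻¹' E) := by
  obtain ⟨S, rfl⟩ := hE
  refine ⟨(fun p => (p.1.comp (ContinuousLinearMap.inr ℝ Y Y'), p.2 - p.1 (y, 0))) '' S, ?_⟩
  ext z
  have hsplit : ∀ φ : Y × Y' →L[ℝ] ℝ, φ (y, z) = φ (y, 0) + φ (0, z) := fun φ => by
    rw [← map_add, Prod.mk_add_mk, add_zero, zero_add]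
  simp only [Set.mem_preimage, Set.biInter_image, Set.mem_iInter, Set.mem_ofPred_eq,
    ContinuousLinearMap.comp_apply, ContinuousLinearMap.inr_apply, hsplit, lt_sub_iff_add_lt']

end EvenlyConvex

section Sublevel
variable {Y : Type*} [AddCommGroup Y] [Module ℝ Y] [TopologicalSpace Y]

lemma ContinuousLinearMap.surjective_of_ne_zero {φ : Y →L[ℝ] ℝ} (hφ : φ ≠ 0) :
    Function.Surjective φ :=
  LinearMap.surjective_of_ne_zero fun h => hφ (ContinuousLinearMap.coe_injective h)

def etaSublevel (η : ℕ) (s : EReal) : Set ℝ :=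
  if η = 0 then {t | (t : EReal) < s} else {t | (t : EReal) ≤ s}

lemma isLowerSet_etaSublevel (η : ℕ) (s : EReal) : IsLowerSet (etaSublevel η s) := by
  intro a b hba ha
  unfold etaSublevel at *
  split_ifs at * with hη
  · exact (EReal.coe_le_coe_iff.2 hba).trans_lt ha
  · exact (EReal.coe_le_coe_iff.2 hba).trans ha

lemma etaSublevel_eq_univ_iff {η : ℕ} {s : EReal} : etaSublevel η s = Set.univ ↔ s = ⊤ := by
  refine ⟨fun h => ?_, fun h => ?_⟩
  · by_contra hs
    have hmem : s.toReal + 1 ∈ etaSublevel η s := h ▸ Set.mem_univ _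
    have hle : ((s.toReal + 1 : ℝ) : EReal) ≤ s := by
      unfold etaSublevel at hmem
      split_ifs at hmem
      exacts [le_of_lt hmem, hmem]
    induction s using EReal.rec with
    | bot => exact EReal.coe_ne_bot _ (le_bot_iff.1 hle)
    | coe r => exact absurd (EReal.coe_le_coe_iff.1 hle) (by simp)
    | top => exact hs rfl
  · subst h
    unfold etaSublevel
    split_ifs <;> simp [EReal.coe_lt_top]

lemma isEConvex_preimage_etaSublevel (φ : Y →L[ℝ] ℝ) (η : ℕ) (s : EReal) :
    IsEConvex (φ ⁻¹' etaSublevel η s) := by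
  unfold etaSublevel
  induction s using EReal.rec with
  | bot => split_ifs <;> simpa using isEConvex_empty
  | coe r => split_ifs <;> simp [isEConvex_setOf_lt, isEConvex_setOf_le]
  | top => split_ifs <;> simpa using isEConvex_univ

lemma preimage_etaSublevel_eq_univ_iff {φ : Y →L[ℝ] ℝ} (hφ : φ ≠ 0) {η : ℕ} {s : EReal} :
    φ ⁻¹' etaSublevel η s = Set.univ ↔ s = ⊤ := by
  rw [← etaSublevel_eq_univ_iff, Set.preimage_eq_univ_iff,
    (ContinuousLinearMap.surjective_of_ne_zero hφ).range_eq, Set.univ_subset_iff]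

end Sublevel

section NegSet
variable {G : Type*} [AddCommGroup G]

lemma negSet_eq_empty_iff {A : Set G} : negSet A = ∅ ↔ A = Set.univ := by
  unfold negSet
  split_ifs with h₁ h₂
  · simp [h₁, Set.empty_ne_univ]
  · simp [h₂]
  · simp [h₁, h₂]

lemma negSet_negSet {A : Set G} (h : A ≠ Set.univ) : negSet (negSet A) = A := by
  by_cases h₀ : A = ∅
  · subst h₀
    simp [negSet]
  · have hneg₀ : -A ≠ ∅ := by rwa [Ne, Set.neg_eq_empty]
    have hneg : -A ≠ Set.univ := by rwa [Ne, ← Set.neg_univ, neg_inj]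
    simp [negSet, h₀, h, hneg₀, hneg]

end NegSet

section Conjugates
omit [IsTopologicalAddGroup X] [ContinuousSMul ℝ X]
  [IsTopologicalAddGroup Z] [ContinuousSMul ℝ Z]

lemma setOf_exists_le_eq_etaSublevel (C : Set (X × Z)) (x' : X →L[ℝ] ℝ) (z' : Z →L[ℝ] ℝ) :
    {t : ℝ | ∃ p ∈ C, t ≤ x' p.1 + z' p.2} =
      etaSublevel (etaSet C x' z') (⨆ p ∈ C, ((x' p.1 + z' p.2 : ℝ) : EReal)) := by
  by_cases hatt : ∀ p ∈ C,
      ((x' p.1 + z' p.2 : ℝ) : EReal) < ⨆ q ∈ C, ((x' q.1 + z' q.2 : ℝ) : EReal)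
  · rw [etaSet, if_pos hatt, etaSublevel, if_pos rfl]
    ext t
    refine ⟨fun ⟨p, hp, ht⟩ => (EReal.coe_le_coe_iff.2 ht).trans_lt (hatt p hp), fun ht => ?_⟩
    obtain ⟨p, hp, hlt⟩ := lt_biSup_iff.1 (Set.mem_ofPred.1 ht)
    exact ⟨p, hp, (EReal.coe_lt_coe_iff.1 hlt).le⟩
  · rw [etaSet, if_neg hatt, etaSublevel, if_neg one_ne_zero]
    push Not at hatt
    obtain ⟨p₀, hp₀, hmax⟩ := hatt
    ext t
    refine ⟨fun ⟨p, hp, ht⟩ => (EReal.coe_le_coe_iff.2 ht).trans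
      (le_biSup (fun q => ((x' q.1 + z' q.2 : ℝ) : EReal)) hp), fun ht => ?_⟩
    exact ⟨p₀, hp₀, EReal.coe_le_coe_iff.1 (le_trans ht hmax)⟩

lemma Sclosed_add_preimage {x' : X →L[ℝ] ℝ} {z' : Z →L[ℝ] ℝ} (hz' : z' ≠ 0) {S : Set ℝ}
    (hS : IsLowerSet S) (x : X) :
    Sclosed x' z' x + z' ⁻¹' S = (fun z => x' x + z' z) ⁻¹' S := by
  ext z
  constructor
  · rintro ⟨v, hv, u, hu, rfl⟩
    have hv : x' x + z' v ≤ 0 := hv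
    exact hS (show x' x + z' (v + u) ≤ z' u by rw [map_add]; linarith) hu
  · intro hz
    obtain ⟨v, hv⟩ := ContinuousLinearMap.surjective_of_ne_zero hz' (-x' x)
    refine ⟨v, show x' x + z' v ≤ 0 by rw [hv, add_neg_cancel], z - v, ?_, add_sub_cancel _ _⟩
    simpa [Set.mem_preimage, map_sub, hv, add_comm] using hz

local notation "𝕎" => (X →L[ℝ] ℝ) × (X →L[ℝ] ℝ) × (Z →L[ℝ] ℝ) × ℝ

variable {K : Set Z} {f : X → Set Z}

/-- `dom σ_f` inside the parameter space `X* × X* × (K* ∖ {0}) × ℝ`. -/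
def sigmaDom (K : Set Z) (f : X → Set Z) : Set 𝕎 :=
  {w | w.2.2.1 ∈ negPolar K \ {0} ∧ sigmaF K f w < ⊤}

def sigmaLevel (K : Set Z) (f : X → Set Z) (w : 𝕎) (x : X) : Set Z :=
  if etaSet (epiK K f) w.1 w.2.2.1 = 0 then
    {z : Z | ((w.1 x + w.2.2.1 z : ℝ) : EReal) < sigmaF K f w}
  else
    {z : Z | ((w.1 x + w.2.2.1 z : ℝ) : EReal) ≤ sigmaF K f w}

lemma sigmaLevel_eq_preimage (w : 𝕎) (x : X) :
    sigmaLevel K f w x =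
      (fun z => w.1 x + w.2.2.1 z) ⁻¹'
        etaSublevel (etaSet (epiK K f) w.1 w.2.2.1) (sigmaF K f w) := by
  unfold sigmaLevel etaSublevel
  split_ifs <;> rfl

lemma subset_of_sigmaF_ne_top {w : 𝕎} (h : sigmaF K f w ≠ ⊤) :
    svDom f ⊆ {x | w.2.1 x < w.2.2.2} := by
  by_contra hH
  exact h (if_neg hH)

lemma iUnion_add_Sclosed_neg (h0 : (0 : Z) ∈ K) (x' : X →L[ℝ] ℝ) {z' : Z →L[ℝ] ℝ}
    (hz' : z' ∈ negPolar K) :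
    ⋃ x, f x + Sclosed x' z' (-x) = z' ⁻¹' {t | ∃ p ∈ epiK K f, t ≤ x' p.1 + z' p.2} := by
  ext z
  simp only [Set.mem_iUnion, Set.mem_preimage, Set.mem_ofPred_eq]
  constructor
  · rintro ⟨x, u, hu, v, hv, rfl⟩
    have hv : x' (-x) + z' v ≤ 0 := hv
    refine ⟨(x, u), ⟨u, hu, 0, h0, add_zero u⟩, ?_⟩
    simp only [map_add, map_neg] at hv ⊢
    linarith
  · rintro ⟨⟨x, _⟩, ⟨u, hu, k, hk, rfl⟩, hle⟩
    refine ⟨x, u, hu, z - u, ?_, add_sub_cancel _ _⟩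
    show x' (-x) + z' (z - u) ≤ 0
    simp only [map_add, map_neg, map_sub] at hle ⊢
    linarith [hz' k hk]

lemma cConj_eq_negSet (h0 : (0 : Z) ∈ K) {w : 𝕎} (hz' : w.2.2.1 ∈ negPolar K \ {0})
    (hH : svDom f ⊆ {x | w.2.1 x < w.2.2.2}) :
    cConj K f w =
      negSet (w.2.2.1 ⁻¹' etaSublevel (etaSet (epiK K f) w.1 w.2.2.1) (sigmaF K f w)) := by
  rw [cConj, if_pos ⟨hz', hH⟩, iUnion_add_Sclosed_neg h0 _ hz'.1,
    setOf_exists_le_eq_etaSublevel, sigmaF, if_pos hH,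
    eco_eq_self (isEConvex_preimage_etaSublevel _ _ _)]

lemma cConj_ne_empty_iff (h0 : (0 : Z) ∈ K) {w : 𝕎} :
    cConj K f w ≠ ∅ ↔ w ∈ sigmaDom K f := by
  by_cases hcond : w.2.2.1 ∈ negPolar K \ {0} ∧ svDom f ⊆ {x | w.2.1 x < w.2.2.2}
  · rw [cConj_eq_negSet h0 hcond.1 hcond.2, Ne, negSet_eq_empty_iff,
      preimage_etaSublevel_eq_univ_iff (fun h => hcond.1.2 h), sigmaDom, Set.mem_ofPred_eq,
      lt_top_iff_ne_top]
    exact (and_iff_right hcond.1).symm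
  · rw [cConj, if_neg hcond, Ne, eq_self_iff_true, not_true_eq_false, false_iff]
    exact fun hw => hcond ⟨hw.1, subset_of_sigmaF_ne_top hw.2.ne⟩

lemma Sclosed_add_negSet_cConj (h0 : (0 : Z) ∈ K) {w : 𝕎} (hw : w ∈ sigmaDom K f)
    (x : X) :
    Sclosed w.1 w.2.2.1 x + negSet (cConj K f w) = sigmaLevel K f w x := by
  have hz' : w.2.2.1 ≠ 0 := fun h => hw.1.2 h
  rw [cConj_eq_negSet h0 hw.1 (subset_of_sigmaF_ne_top hw.2.ne),
    negSet_negSet (mt (preimage_etaSublevel_eq_univ_iff hz').1 hw.2.ne),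
    Sclosed_add_preimage hz' (isLowerSet_etaSublevel _ _), sigmaLevel_eq_preimage]

lemma mem_cPrimeConj_cConj_iff (h0 : (0 : Z) ∈ K) {x : X} {z : Z} :
    z ∈ cPrimeConj (cConj K f) x ↔
      ∀ w ∈ sigmaDom K f, w.2.1 x < w.2.2.2 ∧ z ∈ sigmaLevel K f w x := by
  have hdom : {w | cConj K f w ≠ ∅} = sigmaDom K f := Set.ext fun w => cConj_ne_empty_iff h0
  rw [cPrimeConj]
  split_ifs with hc
  · rw [hdom, Set.mem_iInter₂]
    refine forall₂_congr fun w hw => ?_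
    rw [Sclosed_add_negSet_cConj h0 hw, and_iff_right (hc w ((cConj_ne_empty_iff h0).2 hw))]
  · simp only [Set.mem_empty_iff_false, false_iff]
    push Not at hc
    obtain ⟨w, hw, hge⟩ := hc
    exact fun h => (h w ((cConj_ne_empty_iff h0).1 hw.ne_empty)).1.not_ge hge

lemma cPrimeConj_cConj_eq_iInter (h0 : (0 : Z) ∈ K) {x : X}
    (hx : (cPrimeConj (cConj K f) x).Nonempty) :
    cPrimeConj (cConj K f) x = ⋂ w ∈ sigmaDom K f, sigmaLevel K f w x := by
  obtain ⟨z₀, hz₀⟩ := hx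
  rw [mem_cPrimeConj_cConj_iff h0] at hz₀
  ext z
  rw [mem_cPrimeConj_cConj_iff h0, Set.mem_iInter₂]
  exact forall₂_congr fun w hw => and_iff_right (hz₀ w hw).1

lemma add_mem_sigmaLevel {w : 𝕎} (hw : w.2.2.1 ∈ negPolar K) {x : X} {z k : Z}
    (hz : z ∈ sigmaLevel K f w x) (hk : k ∈ K) : z + k ∈ sigmaLevel K f w x := by
  rw [sigmaLevel_eq_preimage] at hz ⊢
  exact isLowerSet_etaSublevel _ _ (show w.1 x + w.2.2.1 (z + k) ≤ w.1 x + w.2.2.1 z by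
    rw [map_add]; linarith [hw k hk]) hz

lemma cPrimeConj_cConj_add_eq (h0 : (0 : Z) ∈ K) (x : X) :
    cPrimeConj (cConj K f) x + K = cPrimeConj (cConj K f) x := by
  refine (Set.subset_add_left _ h0).antisymm' ?_
  rintro _ ⟨z, hz, k, hk, rfl⟩
  rw [mem_cPrimeConj_cConj_iff h0] at hz ⊢
  exact fun w hw => ⟨(hz w hw).1, add_mem_sigmaLevel hw.1.1 (hz w hw).2 hk⟩

lemma epiK_cPrimeConj_cConj (h0 : (0 : Z) ∈ K) :
    epiK K (cPrimeConj (cConj K f)) =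
      ⋂ w ∈ sigmaDom K f, {p : X × Z | w.2.1 p.1 < w.2.2.2} ∩
        (w.1.coprod w.2.2.1) ⁻¹'
          etaSublevel (etaSet (epiK K f) w.1 w.2.2.1) (sigmaF K f w) := by
  ext ⟨x, z⟩
  simp only [epiK, Set.mem_ofPred_eq, cPrimeConj_cConj_add_eq h0, mem_cPrimeConj_cConj_iff h0,
    sigmaLevel_eq_preimage, Set.mem_iInter₂, Set.mem_inter_iff, Set.mem_preimage,
    ContinuousLinearMap.coprod_apply]

lemma isKEConvex_cPrimeConj_cConj (h0 : (0 : Z) ∈ K) :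
    IsKEConvex K (cPrimeConj (cConj K f)) := by
  rw [IsKEConvex, epiK_cPrimeConj_cConj h0]
  exact isEConvex_iInter fun w => isEConvex_iInter fun _ =>
    (isEConvex_setOf_lt (w.2.1.comp (ContinuousLinearMap.fst ℝ X Z)) _).inter
      (isEConvex_preimage_etaSublevel _ _ _)

lemma isEConvex_cPrimeConj_cConj (h0 : (0 : Z) ∈ K) (x : X) :
    IsEConvex (cPrimeConj (cConj K f) x) := by
  have h : IsEConvex (cPrimeConj (cConj K f) x + K) :=
    (isKEConvex_cPrimeConj_cConj h0).preimage_prodMk x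
  rwa [cPrimeConj_cConj_add_eq h0] at h

lemma add_subset_cPrimeConj_cConj (h0 : (0 : Z) ∈ K) (x : X) :
    f x + K ⊆ cPrimeConj (cConj K f) x := by
  rintro _ ⟨u, hu, k, hk, rfl⟩
  rw [mem_cPrimeConj_cConj_iff h0]
  intro w hw
  have hH := subset_of_sigmaF_ne_top hw.2.ne
  refine ⟨hH (Set.nonempty_iff_ne_empty.1 ⟨u, hu⟩), ?_⟩
  rw [sigmaLevel_eq_preimage, sigmaF, if_pos hH, ← setOf_exists_le_eq_etaSublevel]
  exact ⟨(x, u + k), ⟨u, hu, k, hk, rfl⟩, le_rfl⟩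

end Conjugates

theorem stmt14_general (K : Set Z) (hK0 : ({0} : Set Z) ⊂ K) (f : X → Set Z) :
    (∀ x : X, cPrimeConj (cConj K f) x ≠ ∅ →
      cPrimeConj (cConj K f) x =
        ⋂ w ∈ {w : (X →L[ℝ] ℝ) × (X →L[ℝ] ℝ) × (Z →L[ℝ] ℝ) × ℝ |
            w.2.2.1 ∈ negPolar K \ {0} ∧ sigmaF K f w < ⊤},
          (if etaSet (epiK K f) w.1 w.2.2.1 = 0 then
              {z : Z | ((w.1 x + w.2.2.1 z : ℝ) : EReal) < sigmaF K f w}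
            else
              {z : Z | ((w.1 x + w.2.2.1 z : ℝ) : EReal) ≤ sigmaF K f w})) ∧
    (∀ x : X, IsEConvex (cPrimeConj (cConj K f) x)) ∧
    IsKEConvex K (cPrimeConj (cConj K f)) ∧
    (∀ x : X, cPrimeConj (cConj K f) x = eco (cPrimeConj (cConj K f) x + K)) ∧
    (∀ x : X, f x ⊆ cPrimeConj (cConj K f) x) ∧
    (∀ x : X, f x + K ⊆ cPrimeConj (cConj K f) x) := by
  have h0 : (0 : Z) ∈ K := hK0.subset rfl
  refine ⟨fun x hx => cPrimeConj_cConj_eq_iInter h0 (Set.nonempty_iff_ne_empty.2 hx),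
    isEConvex_cPrimeConj_cConj h0, isKEConvex_cPrimeConj_cConj h0, fun x => ?_,
    fun x => (Set.subset_add_left _ h0).trans (add_subset_cPrimeConj_cConj h0 x),
    add_subset_cPrimeConj_cConj h0⟩
  rw [cPrimeConj_cConj_add_eq h0, eco_eq_self (isEConvex_cPrimeConj_cConj h0 x)]

theorem stmt14 [T2Space X] [LocallyConvexSpace ℝ X] [T2Space Z] [LocallyConvexSpace ℝ Z]
    (K : Set Z) (hKconv : Convex ℝ K) (hKcone : ∀ c : ℝ, 0 < c → c • K ⊆ K)
    (hK0 : ({0} : Set Z) ⊂ K) (hKtop : K ≠ Set.univ)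
    (f : X → Set Z) :
    (∀ x : X, cPrimeConj (cConj K f) x ≠ ∅ →
      cPrimeConj (cConj K f) x =
        ⋂ w ∈ {w : (X →L[ℝ] ℝ) × (X →L[ℝ] ℝ) × (Z →L[ℝ] ℝ) × ℝ |
            w.2.2.1 ∈ negPolar K \ {0} ∧ sigmaF K f w < ⊤},
          (if etaSet (epiK K f) w.1 w.2.2.1 = 0 then
              {z : Z | ((w.1 x + w.2.2.1 z : ℝ) : EReal) < sigmaF K f w}
            else
              {z : Z | ((w.1 x + w.2.2.1 z : ℝ) : EReal) ≤ sigmaF K f w})) ∧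
    (∀ x : X, IsEConvex (cPrimeConj (cConj K f) x)) ∧
    IsKEConvex K (cPrimeConj (cConj K f)) ∧
    (∀ x : X, cPrimeConj (cConj K f) x = eco (cPrimeConj (cConj K f) x + K)) ∧
    (∀ x : X, f x ⊆ cPrimeConj (cConj K f) x) ∧
    (∀ x : X, f x + K ⊆ cPrimeConj (cConj K f) x) :=
  stmt14_general K hK0 f

end
end
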